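/- For nonzero integers a, b, we have ∫_{[-1,1]^7} (𝐚_{(a:b)} · 𝐱)₊^{-1/2} d𝐱 = (2^7 / (135135·|ab|^{21})) · Σ_{ε₀,…,ε₆ ∈ {±1}} ε₀ε₁⋯ε₆ · (ε₀|b^6| + ε₁|ab^5| + ε₂|a²b^4| + ε₃|a³b³| + ε₄|a^4 b²| + ε₅|a^5 b| + ε₆|a^6|)₊^{13/2}. -/

import Mathlib

open scoped BigOperators
open MeasureTheory Set

/-- `x₊^r`: `x^r` if `x > 0`, else `0`. -/
noncomputable def plusPow (x r : ℝ) : ℝ := if 0 < x then x ^ r else 0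

lemma plusPow_nonneg (x r : ℝ) : 0 ≤ plusPow x r := by
  unfold plusPow; split
  · positivity
  · exact le_rfl

lemma plusPow_fun_eq (r : ℝ) :
    (fun x => plusPow x r) = (Set.Ioi (0:ℝ)).indicator (fun y => y ^ r) := by
  funext x
  simp [plusPow, Set.indicator, Set.mem_Ioi]

lemma plusPow_fun_eq' (r : ℝ) :
    (fun x => plusPow x r) = (Set.Ioi (0:ℝ)).indicator (fun y => Real.exp (Real.log y * r)) := by
  funext x
  rcases lt_or_ge 0 x with h | h
  · simp [plusPow, h, Set.indicator, Set.mem_Ioi, Real.rpow_def_of_pos h]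
  · simp [plusPow, not_lt.2 h, Set.indicator, Set.mem_Ioi]

lemma measurable_plusPow (r : ℝ) : Measurable fun x => plusPow x r := by
  rw [plusPow_fun_eq']
  exact ((Real.measurable_log.mul_const r).exp).indicator measurableSet_Ioi

lemma intervalIntegrable_plusPow {r : ℝ} (hr : -1 < r) (a b : ℝ) :
    IntervalIntegrable (fun x => plusPow x r) volume a b := by
  have h := intervalIntegral.intervalIntegrable_rpow' (a := a) (b := b) hr
  rw [intervalIntegrable_iff] at h ⊢
  rw [plusPow_fun_eq]
  exact h.indicator measurableSet_Ioi

lemma integral_plusPow {r : ℝ} (hr : -1 < r) (a b : ℝ) :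
    ∫ x in a..b, plusPow x r = (plusPow b (r+1) - plusPow a (r+1)) / (r+1) := by
  have hpos : (0:ℝ) < r + 1 := by linarith
  have pp : ∀ c : ℝ, 0 ≤ c → plusPow c (r+1) = c ^ (r+1) := by
    intro c hc
    rcases hc.lt_or_eq with h | h
    · simp [plusPow, h]
    · simp [plusPow, ← h, Real.zero_rpow hpos.ne']
  have key : ∀ a b : ℝ, a ≤ b →
      ∫ x in a..b, plusPow x r = (plusPow b (r+1) - plusPow a (r+1)) / (r+1) := by
    intro a b hab
    have zcase : ∀ a b : ℝ, a ≤ b → b ≤ 0 → ∫ x in a..b, plusPow x r = 0 := by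
      intro a b hab hb
      rw [intervalIntegral.integral_congr (g := fun _ => (0:ℝ))]
      · simp
      · intro x hx
        rw [uIcc_of_le hab] at hx
        simp [plusPow, not_lt.2 (hx.2.trans hb)]
    have pcase : ∀ b : ℝ, 0 ≤ b → ∫ x in (0:ℝ)..b, plusPow x r = plusPow b (r+1) / (r+1) := by
      intro b hb
      have : ∫ x in (0:ℝ)..b, plusPow x r = ∫ x in (0:ℝ)..b, x ^ r := by
        apply intervalIntegral.integral_congr_ae
        filter_upwards [] with x hx
        rw [uIoc_of_le hb] at hx
        simp [plusPow, hx.1]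
      rw [this, integral_rpow (Or.inl hr), pp b hb, Real.zero_rpow hpos.ne', sub_zero]
    rcases le_or_gt b 0 with hb | hb
    · rw [zcase a b hab hb]
      have h1 : plusPow b (r+1) = 0 := by simp [plusPow, not_lt.2 hb]
      have h2 : plusPow a (r+1) = 0 := by simp [plusPow, not_lt.2 (hab.trans hb)]
      rw [h1, h2]; ring
    rcases le_or_gt 0 a with ha | ha
    · have h0b := pcase b (le_of_lt hb)
      have h0a := pcase a ha
      have hsplit := intervalIntegral.integral_add_adjacent_intervals
        (intervalIntegrable_plusPow hr 0 a) (intervalIntegrable_plusPow hr a b)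
      -- ∫0..a + ∫a..b = ∫0..b
      have : ∫ x in a..b, plusPow x r = plusPow b (r+1)/(r+1) - plusPow a (r+1)/(r+1) := by
        rw [← h0b, ← hsplit, h0a]; ring
      rw [this]; ring
    · have hsplit := intervalIntegral.integral_add_adjacent_intervals
        (intervalIntegrable_plusPow hr a 0) (intervalIntegrable_plusPow hr 0 b)
      rw [← hsplit, zcase a 0 (le_of_lt ha) le_rfl, pcase b (le_of_lt hb)]
      have h2 : plusPow a (r+1) = 0 := by simp [plusPow, not_lt.2 (le_of_lt ha)]
      rw [h2]; ring
  rcases le_total a b with hab | hab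
  · exact key a b hab
  · rw [intervalIntegral.integral_symm, key b a hab]; ring

lemma integrableOn_plusPow_affine {r : ℝ} (hr : -1 < r) {w : ℝ} (hw : w ≠ 0) (c : ℝ) :
    IntegrableOn (fun t => plusPow (c + w * t) r) (Icc (-1:ℝ) 1) volume := by
  have h1 := intervalIntegrable_plusPow hr (c - w) (c + w)
  have h2 := h1.comp_add_left c
  have h2' : IntervalIntegrable (fun x => plusPow (c + x) r) volume (-w) w := by
    have e1 : c - w - c = -w := by ring
    have e2 : c + w - c = w := by ring
    rwa [e1, e2] at h2
  have h3 := h2'.comp_mul_left (c := w)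
  have h3' : IntervalIntegrable (fun t => plusPow (c + w * t) r) volume (-1) 1 := by
    have e1 : -w / w = (-1:ℝ) := by field_simp
    have e2 : w / w = (1:ℝ) := div_self hw
    rwa [e1, e2] at h3
  rw [intervalIntegrable_iff_integrableOn_Ioc_of_le (by norm_num : (-1:ℝ) ≤ 1)] at h3'
  exact (integrableOn_Icc_iff_integrableOn_Ioc).2 h3'

lemma integral_Icc_plusPow_affine {r : ℝ} (hr : -1 < r) {w : ℝ} (hw : w ≠ 0) (c : ℝ) :
    ∫ t in Icc (-1:ℝ) 1, plusPow (c + w * t) r =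
      (plusPow (c + |w|) (r+1) - plusPow (c - |w|) (r+1)) / ((r+1) * |w|) := by
  have hr1 : (0:ℝ) < r + 1 := by linarith
  rw [MeasureTheory.integral_Icc_eq_integral_Ioc,
    ← intervalIntegral.integral_of_le (by norm_num : (-1:ℝ) ≤ 1)]
  have hfun : (fun t => plusPow (c + w * t) r) = fun t => plusPow (w * t + c) r := by
    funext t; rw [add_comm]
  rw [hfun, intervalIntegral.integral_comp_mul_add (fun u => plusPow u r) hw c,
    integral_plusPow hr]
  have e1 : w * (-1) + c = c - w := by ring
  have e2 : w * 1 + c = c + w := by ring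
  rw [e1, e2, smul_eq_mul]
  rcases hw.lt_or_gt with h | h
  · rw [abs_of_neg h, show c + -w = c - w from by ring, show c - -w = c + w from by ring,
      show (r+1) * -w = -((r+1)*w) from by ring, div_neg, ← neg_div, neg_sub,
      inv_mul_eq_div, div_div]
  · rw [abs_of_pos h, inv_mul_eq_div, div_div]

/-- The sign `+1` or `-1` associated to a boolean. -/
def sgn (b : Bool) : ℝ := if b then 1 else -1

lemma measurable_plusPow_sum {m : ℕ} (r d : ℝ) (v : Fin m → ℝ) :
    Measurable fun x : Fin m → ℝ => plusPow (d + ∑ i, v i * x i) r :=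
  (measurable_plusPow r).comp (measurable_const.add
    (Finset.measurable_sum _ fun i _ => (by fun_prop : Measurable fun x : Fin m → ℝ => v i * x i)))

lemma main_lemma {r : ℝ} (hr : -1 < r) (hrk : ∀ k : ℕ, r + (k:ℝ) ≠ 0) :
    ∀ (n : ℕ) (w : Fin n → ℝ), (∀ i, w i ≠ 0) → ∀ c : ℝ,
    Integrable (fun x : Fin n → ℝ => plusPow (c + ∑ i, w i * x i) r)
        (Measure.pi fun _ => volume.restrict (Icc (-1:ℝ) 1)) ∧
      (∫ x, plusPow (c + ∑ i, w i * x i) r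
          ∂(Measure.pi fun _ : Fin n => volume.restrict (Icc (-1:ℝ) 1)))
        = (∏ k ∈ Finset.range n, (r + k + 1))⁻¹ * (∏ i, |w i|)⁻¹ *
            ∑ ε : Fin n → Bool, (∏ i, sgn (ε i)) *
              plusPow (c + ∑ i, sgn (ε i) * |w i|) (r + n) := by
  have hfin : IsFiniteMeasure ((volume : Measure ℝ).restrict (Icc (-1:ℝ) 1)) := by
    constructor; rw [Measure.restrict_apply_univ]; simp [Real.volume_Icc]
  intro n
  induction n with
  | zero =>
      intro w hw c
      haveI : IsFiniteMeasure (Measure.pi fun _ : Fin 0 => volume.restrict (Icc (-1:ℝ) 1)) := by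
        constructor; rw [Measure.pi_univ]; simp
      have hconst : (fun x : Fin 0 → ℝ => plusPow (c + ∑ i, w i * x i) r)
          = fun _ => plusPow c r := by
        funext x; simp
      constructor
      · rw [hconst]; exact integrable_const _
      · rw [hconst, MeasureTheory.integral_unique]
        rw [measureReal_def, Measure.pi_univ]
        simp
  | succ n ih =>
      intro w hw c
      have hn0 : (0:ℝ) ≤ (n:ℝ) := Nat.cast_nonneg n
      have hr' : -1 < r + (n:ℝ) := by linarith
      have hrn1 : r + (n:ℝ) + 1 ≠ 0 := by
        have h := hrk (n+1); push_cast at h; intro hcon; exact h (by linarith)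
      set μ1 : Measure ℝ := volume.restrict (Icc (-1:ℝ) 1) with hμ1
      set w' : Fin n → ℝ := fun j => w j.succ with hw'def
      have hw' : ∀ j, w' j ≠ 0 := fun j => hw j.succ
      set Cn : ℝ := (∏ k ∈ Finset.range n, (r + k + 1))⁻¹ * (∏ i, |w' i|)⁻¹ with hCn
      set m : (Fin n → Bool) → ℝ := fun ε => ∑ j, sgn (ε j) * |w' j| with hm
      set F : ℝ × (Fin n → ℝ) → ℝ :=
        fun p => plusPow ((c + w 0 * p.1) + ∑ j, w' j * p.2 j) r with hF
      have hFmeas : Measurable F := by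
        rw [hF]
        apply (measurable_plusPow r).comp
        apply Measurable.add
        · exact measurable_const.add (measurable_fst.const_mul (w 0))
        · exact Finset.measurable_sum _ fun j _ =>
            (by fun_prop : Measurable fun p : ℝ × (Fin n → ℝ) => w' j * p.2 j)
      set e : (Fin (n+1) → ℝ) ≃ᵐ ℝ × (Fin n → ℝ) :=
        MeasurableEquiv.piFinSuccAbove (fun _ : Fin (n+1) => ℝ) 0 with he
      have hmp : MeasurePreserving e (Measure.pi fun _ : Fin (n+1) => μ1)
          (μ1.prod (Measure.pi fun _ : Fin n => μ1)) :=
        measurePreserving_piFinSuccAbove (fun _ => μ1) 0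
      have hpieq : (Measure.pi fun _ : Fin (n+1) => μ1)
          = Measure.map e.symm (μ1.prod (Measure.pi fun _ : Fin n => μ1)) :=
        ((MeasurePreserving.symm e hmp).map_eq).symm
      have hcomp : ∀ p : ℝ × (Fin n → ℝ),
          plusPow (c + ∑ i, w i * (e.symm p) i) r = F p := by
        rintro ⟨a, y⟩
        have h0 : e.symm (a, y) 0 = a := by
          rw [he, MeasurableEquiv.piFinSuccAbove_symm_apply, Fin.insertNthEquiv_apply]
          exact Fin.insertNth_apply_same (α := fun _ : Fin (n+1) => ℝ) 0 a y
        have hj : ∀ j : Fin n, e.symm (a, y) ((0:Fin (n+1)).succAbove j) = y j := by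
          intro j
          rw [he, MeasurableEquiv.piFinSuccAbove_symm_apply, Fin.insertNthEquiv_apply]
          exact Fin.insertNth_apply_succAbove (α := fun _ : Fin (n+1) => ℝ) 0 a y j
        have hsumeq : (∑ i, w i * (e.symm (a,y)) i) = w 0 * a + ∑ j, w' j * y j := by
          rw [Fin.sum_univ_succAbove (fun i => w i * (e.symm (a,y)) i) 0, h0]
          congr 1
        simp only [hF]
        rw [hsumeq, add_assoc]
      have ihh := fun a : ℝ => ih w' hw' (c + w 0 * a)
      have hgval : ∀ a : ℝ, (∫ y, F (a, y) ∂(Measure.pi fun _ : Fin n => μ1))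
          = Cn * ∑ ε : Fin n → Bool, (∏ j, sgn (ε j)) *
              plusPow ((c + w 0 * a) + m ε) (r + n) := by
        intro a
        have h := (ihh a).2
        rw [mul_assoc] at h
        simp only [hF, hm, hCn, mul_assoc]
        exact h
      have hterm : ∀ d : ℝ, Integrable (fun a => plusPow (d + w 0 * a) (r + n)) μ1 :=
        fun d => integrableOn_plusPow_affine hr' (hw 0) d
      have htermε : ∀ ε : Fin n → Bool,
          Integrable (fun a => plusPow ((c + w 0 * a) + m ε) (r + n)) μ1 := by
        intro ε
        have h := hterm (c + m ε)
        have heq : (fun a => plusPow ((c + m ε) + w 0 * a) (r + n))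
            = fun a => plusPow ((c + w 0 * a) + m ε) (r + n) := by
          funext a; congr 1; ring
        rwa [heq] at h
      have hgint : Integrable (fun a => Cn * ∑ ε : Fin n → Bool, (∏ j, sgn (ε j)) *
          plusPow ((c + w 0 * a) + m ε) (r + n)) μ1 := by
        apply Integrable.const_mul
        apply integrable_finset_sum
        intro ε _
        exact (htermε ε).const_mul _
      have hFint : Integrable F (μ1.prod (Measure.pi fun _ : Fin n => μ1)) := by
        refine (integrable_prod_iff hFmeas.aestronglyMeasurable).2 ⟨?_, ?_⟩
        · exact Filter.Eventually.of_forall fun a => (ihh a).1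
        · have heq : (fun a => ∫ y, ‖F (a, y)‖ ∂(Measure.pi fun _ : Fin n => μ1))
              = fun a => Cn * ∑ ε : Fin n → Bool, (∏ j, sgn (ε j)) *
                  plusPow ((c + w 0 * a) + m ε) (r + n) := by
            funext a
            rw [← hgval a]
            refine integral_congr_ae (Filter.Eventually.of_forall fun y => ?_)
            exact Real.norm_of_nonneg (plusPow_nonneg _ _)
          rw [heq]; exact hgint
      have hcompfun : ((fun x : Fin (n+1) → ℝ => plusPow (c + ∑ i, w i * x i) r) ∘ e.symm) = F :=
        funext fun p => hcomp p
      constructor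
      · rw [hpieq]
        exact (integrable_map_equiv e.symm _).mpr (hcompfun ▸ hFint)
      · have h1 : (∫ x, plusPow (c + ∑ i, w i * x i) r ∂(Measure.pi fun _ : Fin (n+1) => μ1))
            = ∫ p, F p ∂(μ1.prod (Measure.pi fun _ : Fin n => μ1)) := by
          rw [hpieq, integral_map_equiv e.symm (fun x => plusPow (c + ∑ i, w i * x i) r)]
          exact integral_congr_ae (Filter.Eventually.of_forall fun p => hcomp p)
        rw [h1, integral_prod F hFint]
        have h2 : (∫ a, (∫ y, F (a, y) ∂(Measure.pi fun _ : Fin n => μ1)) ∂μ1)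
            = ∫ a, Cn * ∑ ε : Fin n → Bool, (∏ j, sgn (ε j)) *
                plusPow ((c + w 0 * a) + m ε) (r + n) ∂μ1 :=
          integral_congr_ae (Filter.Eventually.of_forall fun a => hgval a)
        rw [h2, integral_const_mul, integral_finset_sum _ (fun ε _ => (htermε ε).const_mul _)]
        have h3 : ∀ ε : Fin n → Bool,
            (∫ a, (∏ j, sgn (ε j)) * plusPow ((c + w 0 * a) + m ε) (r + n) ∂μ1)
              = (∏ j, sgn (ε j)) * ((plusPow ((c + m ε) + |w 0|) (r + n + 1)
                  - plusPow ((c + m ε) - |w 0|) (r + n + 1)) / ((r + n + 1) * |w 0|)) := by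
          intro ε
          rw [integral_const_mul]
          congr 1
          have heq : (fun a => plusPow ((c + w 0 * a) + m ε) (r + n))
              = fun a => plusPow ((c + m ε) + w 0 * a) (r + n) := by
            funext a; congr 1; ring
          rw [heq, hμ1]
          exact integral_Icc_plusPow_affine hr' (hw 0) (c + m ε)
        rw [Finset.sum_congr rfl fun ε _ => h3 ε]
        -- reindex the target sum
        have ht : ∀ ε : Fin n → Bool,
            (∏ i, sgn ((Fin.consEquiv fun _ : Fin (n+1) => Bool) (true, ε) i)) *
              plusPow (c + ∑ i, sgn ((Fin.consEquiv fun _ : Fin (n+1) => Bool) (true, ε) i) * |w i|)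
                (r + (n+1:ℕ))
            = (∏ j, sgn (ε j)) * plusPow ((c + m ε) + |w 0|) (r + n + 1) := by
          intro ε
          simp only [Fin.consEquiv_apply]
          rw [Fin.prod_univ_succ, Fin.sum_univ_succ]
          simp only [Fin.cons_zero, Fin.cons_succ]
          have hsg : sgn true = 1 := rfl
          rw [hsg, one_mul, one_mul]
          have harg : c + (|w 0| + ∑ j, sgn (ε j) * |w j.succ|) = (c + m ε) + |w 0| := by
            simp only [hm, hw'def]; ring
          have hexp : (r + ((n+1:ℕ):ℝ)) = r + n + 1 := by push_cast; ring
          rw [harg, hexp]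
        have hf : ∀ ε : Fin n → Bool,
            (∏ i, sgn ((Fin.consEquiv fun _ : Fin (n+1) => Bool) (false, ε) i)) *
              plusPow (c + ∑ i, sgn ((Fin.consEquiv fun _ : Fin (n+1) => Bool) (false, ε) i) * |w i|)
                (r + (n+1:ℕ))
            = -((∏ j, sgn (ε j)) * plusPow ((c + m ε) - |w 0|) (r + n + 1)) := by
          intro ε
          simp only [Fin.consEquiv_apply]
          rw [Fin.prod_univ_succ, Fin.sum_univ_succ]
          simp only [Fin.cons_zero, Fin.cons_succ]
          have hsg : sgn false = -1 := rfl
          rw [hsg]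
          have harg : c + (-1 * |w 0| + ∑ j, sgn (ε j) * |w j.succ|) = (c + m ε) - |w 0| := by
            simp only [hm, hw'def]
            ring
          rw [harg]
          have hexp : r + ((n+1 : ℕ) : ℝ) = r + n + 1 := by push_cast; ring
          rw [hexp]
          ring
        have hsum : (∑ E : Fin (n+1) → Bool, (∏ i, sgn (E i)) *
              plusPow (c + ∑ i, sgn (E i) * |w i|) (r + (n+1:ℕ)))
            = ∑ ε : Fin n → Bool, ((∏ j, sgn (ε j)) * plusPow ((c + m ε) + |w 0|) (r + n + 1)
                - (∏ j, sgn (ε j)) * plusPow ((c + m ε) - |w 0|) (r + n + 1)) := by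
          rw [← Equiv.sum_comp (Fin.consEquiv fun _ : Fin (n+1) => Bool), Fintype.sum_prod_type,
            Fintype.sum_bool]
          rw [Finset.sum_congr rfl fun ε _ => ht ε, Finset.sum_congr rfl fun ε _ => hf ε]
          rw [Finset.sum_sub_distrib, Finset.sum_neg_distrib]
          ring
        rw [hsum, Finset.prod_range_succ, Fin.prod_univ_succ, Finset.mul_sum, Finset.mul_sum]
        refine Finset.sum_congr rfl fun ε _ => ?_
        have hprn : (∏ k ∈ Finset.range n, (r + (k:ℝ) + 1)) ≠ 0 := by
          refine Finset.prod_ne_zero_iff.2 fun k _ => ?_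
          have h := hrk (k+1); push_cast at h; intro hcon; exact h (by linarith)
        have hpw : (∏ i : Fin n, |w' i|) ≠ 0 :=
          Finset.prod_ne_zero_iff.2 fun j _ => abs_ne_zero.2 (hw' j)
        have hw0 : |w 0| ≠ 0 := abs_ne_zero.2 (hw 0)
        rw [hCn]
        simp only [hw'def] at hpw ⊢
        field_simp

lemma restrict_pi_cube (n : ℕ) :
    ((Measure.pi fun _ : Fin n => (volume : Measure ℝ)).restrict
        (Set.pi univ fun _ => Icc (-1:ℝ) 1))
      = Measure.pi fun _ => volume.restrict (Icc (-1:ℝ) 1) := by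
  refine (Measure.pi_eq fun s hs => ?_).symm
  rw [Measure.restrict_apply (MeasurableSet.univ_pi hs), ← Set.pi_inter_distrib,
    Measure.pi_pi]
  exact Finset.prod_congr rfl fun i _ => (Measure.restrict_apply (hs i)).symm


/-- The vector `𝐚_{(a:b)} = (b^6, a b^5, a² b^4, …, a^6) ∈ ℝ^7`. -/
noncomputable def aVec (a b : ℤ) : Fin 7 → ℝ :=
  fun i => (a : ℝ) ^ (i : ℕ) * (b : ℝ) ^ (6 - (i : ℕ))

theorem stmt_2 (a b : ℤ) (ha : a ≠ 0) (hb : b ≠ 0) :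
    (∫ x : Fin 7 → ℝ in Set.univ.pi fun _ => Set.Icc (-1:ℝ) 1,
        plusPow (∑ i, aVec a b i * x i) (-1/2))
      = (2 ^ 7 / (135135 * |(a : ℝ) * b| ^ 21)) *
          ∑ ε : Fin 7 → Bool, (∏ i, sgn (ε i)) *
            plusPow (∑ i, sgn (ε i) * |aVec a b i|) (13/2) := by
  have ha' : (a:ℝ) ≠ 0 := Int.cast_ne_zero.2 ha
  have hb' : (b:ℝ) ≠ 0 := Int.cast_ne_zero.2 hb
  have hw : ∀ i : Fin 7, aVec a b i ≠ 0 :=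
    fun i => mul_ne_zero (pow_ne_zero _ ha') (pow_ne_zero _ hb')
  have hrk : ∀ k : ℕ, (-1/2 : ℝ) + (k:ℝ) ≠ 0 := by
    intro k
    rcases k with _ | k
    · norm_num
    · have h1 : (1:ℝ) ≤ ((k+1 : ℕ) : ℝ) := by exact_mod_cast Nat.one_le_iff_ne_zero.2 (Nat.succ_ne_zero k)
      push_cast at h1 ⊢
      intro h; linarith
  have hmain := (main_lemma (r := -1/2) (by norm_num) hrk 7 (aVec a b) hw 0).2
  have hLHS : (∫ x : Fin 7 → ℝ in Set.univ.pi fun _ => Set.Icc (-1:ℝ) 1,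
      plusPow (∑ i, aVec a b i * x i) (-1/2))
      = ∫ x, plusPow ((0:ℝ) + ∑ i, aVec a b i * x i) (-1/2)
          ∂(Measure.pi fun _ : Fin 7 => volume.restrict (Icc (-1:ℝ) 1)) := by
    rw [← restrict_pi_cube 7]
    simp only [MeasureTheory.volume_pi, zero_add]
  rw [hLHS, hmain]
  have hexp : ((-1/2 : ℝ) + ((7:ℕ):ℝ)) = 13/2 := by norm_num
  simp only [zero_add, hexp]
  have hC : (∏ k ∈ Finset.range 7, ((-1/2 : ℝ) + (k:ℝ) + 1)) = 135135/128 := by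
    rw [Finset.prod_range_succ, Finset.prod_range_succ, Finset.prod_range_succ,
      Finset.prod_range_succ, Finset.prod_range_succ, Finset.prod_range_succ,
      Finset.prod_range_succ, Finset.prod_range_zero]
    norm_num
  have hW : (∏ i : Fin 7, |aVec a b i|) = |(a:ℝ)*b|^21 := by
    rw [Fin.prod_univ_seven]
    simp only [aVec, abs_mul, abs_pow,
      show ((0:Fin 7):ℕ) = 0 from rfl, show ((1:Fin 7):ℕ) = 1 from rfl,
      show ((2:Fin 7):ℕ) = 2 from rfl, show ((3:Fin 7):ℕ) = 3 from rfl,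
      show ((4:Fin 7):ℕ) = 4 from rfl, show ((5:Fin 7):ℕ) = 5 from rfl,
      show ((6:Fin 7):ℕ) = 6 from rfl,
      show (6-0 : ℕ) = 6 from rfl, show (6-1 : ℕ) = 5 from rfl,
      show (6-2 : ℕ) = 4 from rfl, show (6-3 : ℕ) = 3 from rfl,
      show (6-4 : ℕ) = 2 from rfl, show (6-5 : ℕ) = 1 from rfl,
      show (6-6 : ℕ) = 0 from rfl]
    ring
  rw [hC, hW]
  congr 1
  have hne : |(a:ℝ)*b| ≠ 0 := abs_ne_zero.2 (mul_ne_zero ha' hb')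
  field_simp
  ring
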